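/- For every real θ, exp(−(iθ/2)·(Z⊗Y))·|++⟩ = exp(−(iθ/2)·(Y⊗Z))·|++⟩, and for every real τ there exist a real angle θ and a real scalar λ > 0 such that exp(−τ·(Z⊗Z))·|++⟩ = λ·exp(−(iθ/2)·(Z⊗Y))·|++⟩; i.e. the imaginary-time evolution of |++⟩ under the Hamiltonian Z⊗Z coincides, up to positive normalization, with a single ZY-rotation (equivalently YZ-rotation) of |++⟩. -/

import Mathlib

/-!
For an involution `A` the exponential series splits into even and odd parts, so
`exp (c • A) = cosh c • 1 + sinh c • A`. The operators `Z ⊗ Y` and `Y ⊗ Z` agree on `|++⟩`, which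
gives the first claim. Moreover `(Z ⊗ Y)|++⟩ = -i (Z ⊗ Z)|++⟩`, so both evolutions stay in the real
plane spanned by `|++⟩` and `(Z ⊗ Z)|++⟩`: imaginary time gives `cosh τ |++⟩ - sinh τ (Z ⊗ Z)|++⟩`,
the rotation gives `cos (θ/2) |++⟩ - sin (θ/2) (Z ⊗ Z)|++⟩`, and they match once
`cosh τ + i sinh τ` is written in polar form `λ e^{iθ/2}`.
-/

open Matrix Kronecker

noncomputable section

def PauliY : Matrix (Fin 2) (Fin 2) ℂ := !![0, -Complex.I; Complex.I, 0]
def PauliZ : Matrix (Fin 2) (Fin 2) ℂ := !![1, 0; 0, -1]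

/-- `|++⟩ = |+⟩ ⊗ |+⟩`, the vector in `ℂ⁴` with all coordinates `1/2`. -/
def plus2 : Fin 2 × Fin 2 → ℂ := fun _ => (1 / 2 : ℂ)

open scoped Nat in
theorem NormedSpace.exp_smul_of_mul_self_eq_one {𝔸 : Type*} [Ring 𝔸] [Algebra ℂ 𝔸]
    [TopologicalSpace 𝔸] [IsTopologicalRing 𝔸] [ContinuousSMul ℂ 𝔸] [T2Space 𝔸]
    {A : 𝔸} (hA : A * A = 1) (c : ℂ) :
    NormedSpace.exp (c • A) = Complex.cosh c • (1 : 𝔸) + Complex.sinh c • A := by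
  have hA2 : A ^ 2 = 1 := by rw [sq, hA]
  have hterm (n : ℕ) : ((n ! : ℂ)⁻¹ • (c • A) ^ n) = (c ^ n / n !) • A ^ n := by
    rw [smul_pow, smul_smul, div_eq_inv_mul]
  rw [NormedSpace.exp_eq_tsum ℂ]
  refine HasSum.tsum_eq (HasSum.even_add_odd ?_ ?_)
  · convert (Complex.hasSum_cosh c).smul_const (1 : 𝔸) using 2 with n
    rw [hterm, pow_mul A, hA2, one_pow]
  · convert (Complex.hasSum_sinh c).smul_const A using 2 with n
    rw [hterm, pow_succ A, pow_mul A, hA2, one_pow, one_mul]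

theorem Matrix.kronecker_mul_self_eq_one {R m n : Type*} [CommRing R] [Fintype m] [Fintype n]
    [DecidableEq m] [DecidableEq n] {A : Matrix m m R} {B : Matrix n n R}
    (hA : A * A = 1) (hB : B * B = 1) : (A ⊗ₖ B) * (A ⊗ₖ B) = 1 := by
  rw [← mul_kronecker_mul, hA, hB, one_kronecker_one]

theorem PauliY_mul_self : PauliY * PauliY = 1 := by
  ext i j; fin_cases i <;> fin_cases j <;> simp [PauliY, mul_apply, one_apply]

theorem PauliZ_mul_self : PauliZ * PauliZ = 1 := by
  ext i j; fin_cases i <;> fin_cases j <;> simp [PauliZ, mul_apply, one_apply]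

theorem PauliZ_kronecker_PauliY_mulVec_plus2_eq_PauliY_kronecker_PauliZ_mulVec_plus2 :
    (PauliZ ⊗ₖ PauliY) *ᵥ plus2 = (PauliY ⊗ₖ PauliZ) *ᵥ plus2 := by
  ext ⟨i, j⟩
  fin_cases i <;> fin_cases j <;>
    simp [mulVec, dotProduct, Fintype.sum_prod_type, PauliY, PauliZ, plus2]

theorem PauliZ_kronecker_PauliY_mulVec_plus2_eq_neg_I_smul :
    (PauliZ ⊗ₖ PauliY) *ᵥ plus2 = -Complex.I • ((PauliZ ⊗ₖ PauliZ) *ᵥ plus2) := by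
  ext ⟨i, j⟩
  fin_cases i <;> fin_cases j <;>
    simp [mulVec, dotProduct, Fintype.sum_prod_type, PauliY, PauliZ, plus2]

theorem exp_neg_smul_PauliZ_kronecker_PauliZ_mulVec_plus2 (τ : ℝ) :
    NormedSpace.exp ((-(τ : ℂ)) • (PauliZ ⊗ₖ PauliZ)) *ᵥ plus2
      = (Real.cosh τ : ℂ) • plus2 - (Real.sinh τ : ℂ) • ((PauliZ ⊗ₖ PauliZ) *ᵥ plus2) := by
  rw [NormedSpace.exp_smul_of_mul_self_eq_one
      (kronecker_mul_self_eq_one PauliZ_mul_self PauliZ_mul_self),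
    add_mulVec, smul_mulVec, smul_mulVec, one_mulVec, Complex.cosh_neg, Complex.sinh_neg,
    Complex.ofReal_cosh, Complex.ofReal_sinh, neg_smul, ← sub_eq_add_neg]

theorem exp_PauliZ_kronecker_PauliY_rotation_mulVec_plus2 (θ : ℝ) :
    NormedSpace.exp ((-Complex.I * ((θ : ℂ) / 2)) • (PauliZ ⊗ₖ PauliY)) *ᵥ plus2
      = (Real.cos (θ / 2) : ℂ) • plus2
        - (Real.sin (θ / 2) : ℂ) • ((PauliZ ⊗ₖ PauliZ) *ᵥ plus2) := by
  have harg : -Complex.I * ((θ : ℂ) / 2) = (-(θ / 2 : ℝ) : ℂ) * Complex.I := by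
    push_cast; ring
  rw [NormedSpace.exp_smul_of_mul_self_eq_one
      (kronecker_mul_self_eq_one PauliZ_mul_self PauliY_mul_self),
    add_mulVec, smul_mulVec, smul_mulVec, one_mulVec,
    PauliZ_kronecker_PauliY_mulVec_plus2_eq_neg_I_smul, harg, Complex.cosh_mul_I,
    Complex.sinh_mul_I,
    Complex.cos_neg, Complex.sin_neg, Complex.ofReal_cos, Complex.ofReal_sin, smul_smul,
    neg_mul, neg_mul_neg, mul_assoc, Complex.I_mul_I, mul_neg_one, neg_smul, ← sub_eq_add_neg]

/-- `exp(−(iθ/2)·Z⊗Y)|++⟩ = exp(−(iθ/2)·Y⊗Z)|++⟩` for all real `θ`, and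
the imaginary-time evolution of `|++⟩` under `Z⊗Z` is, up to positive normalization, a single
ZY-rotation of `|++⟩`. -/
theorem imaginary_time_ZZ_eq_ZY_rotation :
    (∀ θ : ℝ,
        NormedSpace.exp ((-Complex.I * ((θ : ℂ) / 2)) • (PauliZ ⊗ₖ PauliY)) *ᵥ plus2
          = NormedSpace.exp ((-Complex.I * ((θ : ℂ) / 2)) • (PauliY ⊗ₖ PauliZ)) *ᵥ plus2) ∧
    (∀ τ : ℝ, ∃ (θ lam : ℝ), 0 < lam ∧
        NormedSpace.exp ((-(τ : ℂ)) • (PauliZ ⊗ₖ PauliZ)) *ᵥ plus2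
          = (lam : ℂ) •
              (NormedSpace.exp ((-Complex.I * ((θ : ℂ) / 2)) • (PauliZ ⊗ₖ PauliY)) *ᵥ
                plus2)) := by
  refine ⟨fun θ => ?_, fun τ => ?_⟩
  · simp only [NormedSpace.exp_smul_of_mul_self_eq_one
      (kronecker_mul_self_eq_one PauliZ_mul_self PauliY_mul_self),
      NormedSpace.exp_smul_of_mul_self_eq_one
      (kronecker_mul_self_eq_one PauliY_mul_self PauliZ_mul_self),
      add_mulVec, smul_mulVec,
      PauliZ_kronecker_PauliY_mulVec_plus2_eq_PauliY_kronecker_PauliZ_mulVec_plus2]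
  · set z : ℂ := ⟨Real.cosh τ, Real.sinh τ⟩
    have hz : z ≠ 0 := fun h => (Real.cosh_pos τ).ne' (congrArg Complex.re h)
    refine ⟨2 * Complex.arg z, ‖z‖, norm_pos_iff.2 hz, ?_⟩
    rw [exp_neg_smul_PauliZ_kronecker_PauliZ_mulVec_plus2,
      exp_PauliZ_kronecker_PauliY_rotation_mulVec_plus2, mul_div_cancel_left₀ _ two_ne_zero,
      smul_sub, smul_smul, smul_smul, ← Complex.ofReal_mul, ← Complex.ofReal_mul,
      Complex.norm_mul_cos_arg, Complex.norm_mul_sin_arg]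

end
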